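/- Lieb–Sokal lemma: let P, Q ∈ ℂ[z_1,…,z_d], fix an index j, and suppose that the polynomial P(z) + w·Q(z) in the d+1 variables z_1,…,z_d,w is stable and that the variable z_j occurs in P + wQ with degree at most 1. Then the polynomial P(z) − (∂Q/∂z_j)(z) is stable or identically zero. -/

import Mathlib

/-!
Fix `ζ` in the open upper half-plane `ℍᵈ` and `w` with `Im w > 0`. Since `P + wQ` is affine in
`z_j`, moving `z_j` to `z_j - 1/w` (which stays in `ℍ`) and multiplying by `w` shows that the
quadratic `Q(ζ) w² + (P - ∂ⱼQ)(ζ) w - ∂ⱼP(ζ)` has no root in `ℍ`. As minus the sum of its roots,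
`(P - ∂ⱼQ)/Q` then has nonnegative imaginary part wherever `Q ≠ 0`, and by `w ↦ -1/w` the same
holds for `(P - ∂ⱼQ)/∂ⱼP`. If `P - ∂ⱼQ` vanished at some `z ∈ ℍᵈ`, then one of `Q`, `∂ⱼP` is
nonzero at `z`, and the imaginary part of the corresponding holomorphic quotient has a local
minimum at `z`. By the open mapping theorem the quotient is locally constant, so `P - ∂ⱼQ`
vanishes near `z`, hence everywhere.
-/

open MvPolynomial Function Filter Topology

namespace MvPolynomial

section Taylor

variable {R σ : Type*} [CommRing R] [DecidableEq σ]

/-- `p` as a polynomial in `X j`, the other variables being frozen at `x`. -/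
noncomputable def univariateAt (x : σ → R) (j : σ) : MvPolynomial σ R →ₐ[R] Polynomial R :=
  aeval (update (fun i => Polynomial.C (x i)) j Polynomial.X)

theorem eval_univariateAt (x : σ → R) (j : σ) (p : MvPolynomial σ R) (s : R) :
    (univariateAt x j p).eval s = eval (update x j s) p := by
  have hpt : (fun i => Polynomial.aeval s (update (fun i => Polynomial.C (x i)) j Polynomial.X i))
      = update x j s := by
    funext i
    rcases eq_or_ne i j with rfl | h <;> simp [*]
  rw [univariateAt, ← Polynomial.coe_aeval_eq_eval, comp_aeval_apply, hpt]
  rfl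

theorem natDegree_univariateAt_le (x : σ → R) (j : σ) (p : MvPolynomial σ R) :
    (univariateAt x j p).natDegree ≤ degreeOf j p := by
  conv_lhs => rw [p.as_sum, map_sum]
  refine Polynomial.natDegree_sum_le_of_forall_le _ _ fun m hm => ?_
  rw [univariateAt, aeval_monomial, Finsupp.prod]
  refine (Polynomial.natDegree_C_mul_le _ _).trans ((Polynomial.natDegree_prod_le _ _).trans ?_)
  calc ∑ i ∈ m.support, (update (fun i => Polynomial.C (x i)) j Polynomial.X i ^ m i).natDegree
      ≤ ∑ i ∈ m.support, if i = j then m i else 0 := by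
        refine Finset.sum_le_sum fun i _ => ?_
        rcases eq_or_ne i j with rfl | h
        · simpa using Polynomial.natDegree_X_pow_le (m i)
        · rw [update_of_ne h, ← Polynomial.C_pow, Polynomial.natDegree_C, if_neg h]
    _ ≤ m j := by rw [Finset.sum_ite_eq']; split_ifs <;> simp
    _ ≤ degreeOf j p := monomial_le_degreeOf j hm

theorem derivative_univariateAt (x : σ → R) (j : σ) (p : MvPolynomial σ R) :
    Polynomial.derivative (univariateAt x j p) = univariateAt x j (pderiv j p) := by
  induction p using MvPolynomial.induction_on with
  | C a => simp
  | add p q hp hq => simp [hp, hq]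
  | mul_X p i hp =>
    simp only [univariateAt, map_mul, aeval_X, Polynomial.derivative_mul, Derivation.leibniz,
      smul_eq_mul, map_add] at hp ⊢
    rcases eq_or_ne i j with rfl | h
    · simp only [hp, update_self, Polynomial.derivative_X, pderiv_X_self, map_one]
      ring
    · simp only [hp, update_of_ne h, Polynomial.derivative_C, pderiv_X_of_ne h, map_zero]
      ring

theorem _root_.Polynomial.eval_eq_eval_add_mul_derivative_of_natDegree_le_one
    {q : Polynomial R} (hq : q.natDegree ≤ 1) (s t : R) :
    q.eval s = q.eval t + (s - t) * q.derivative.eval t := by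
  rw [Polynomial.eq_X_add_C_of_natDegree_le_one hq]
  simp only [Polynomial.eval_add, Polynomial.eval_mul, Polynomial.eval_C, Polynomial.eval_X,
    Polynomial.derivative_add, Polynomial.derivative_C_mul_X, Polynomial.derivative_C, add_zero]
  ring

theorem eval_update_of_degreeOf_le_one {p : MvPolynomial σ R} {j : σ} (hp : degreeOf j p ≤ 1)
    (x : σ → R) (s : R) :
    eval (update x j s) p = eval x p + (s - x j) * eval x (pderiv j p) := by
  have key := Polynomial.eval_eq_eval_add_mul_derivative_of_natDegree_le_one
    ((natDegree_univariateAt_le x j p).trans hp) s (x j)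
  rwa [derivative_univariateAt, eval_univariateAt, eval_univariateAt, eval_univariateAt,
    update_eq_self] at key

end Taylor

end MvPolynomial

namespace Complex

theorem im_neg_inv_pos {w : ℂ} (hw : 0 < w.im) : 0 < (-w⁻¹).im := by
  rw [neg_im, inv_im, neg_div, neg_neg]
  exact div_pos hw (normSq_pos.2 (by rintro rfl; simp at hw))

theorem quadratic_ne_zero_swap {a c e : ℂ} (H : ∀ w : ℂ, 0 < w.im → c * w ^ 2 + a * w - e ≠ 0) :
    ∀ w : ℂ, 0 < w.im → e * w ^ 2 + a * w - c ≠ 0 := by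
  intro w hw hzero
  have hw0 : w ≠ 0 := by rintro rfl; simp at hw
  refine H (-w⁻¹) (im_neg_inv_pos hw) ?_
  field_simp
  linear_combination -hzero

theorem im_div_nonneg_of_quadratic_ne_zero {a c e : ℂ} (hc : c ≠ 0)
    (H : ∀ w : ℂ, 0 < w.im → c * w ^ 2 + a * w - e ≠ 0) : 0 ≤ (a / c).im := by
  obtain ⟨s, hs⟩ := IsAlgClosed.exists_eq_mul_self (discrim c a (-e))
  have him_root : ∀ r : ℂ, c * (r * r) + a * r + -e = 0 → r.im ≤ 0 := fun r hr =>
    not_lt.1 fun hpos => H r hpos (by linear_combination hr)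
  have h₁ := him_root _ ((quadratic_eq_zero_iff hc hs _).2 (Or.inl rfl))
  have h₂ := him_root _ ((quadratic_eq_zero_iff hc hs _).2 (Or.inr rfl))
  have hsum : a / c = -((-a + s) / (2 * c) + (-a - s) / (2 * c)) := by
    field_simp
    ring
  rw [hsum, neg_im, add_im]
  linarith

end Complex

theorem AnalyticAt.eventually_eq_of_isLocalMin_im {E : Type*} [NormedAddCommGroup E]
    [NormedSpace ℂ E] {f : E → ℂ} {z : E} (hf : AnalyticAt ℂ f z)
    (hmin : IsLocalMin (fun y => (f y).im) z) : ∀ᶠ y in 𝓝 z, f y = f z := by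
  refine hf.eventually_constant_or_nhds_le_map_nhds.resolve_right fun hopen => ?_
  obtain ⟨r, hr, hball⟩ :=
    Metric.mem_nhds_iff.1 (hopen (show {u : ℂ | (f z).im ≤ u.im} ∈ map f (𝓝 z) from hmin))
  have hmem : f z - (r / 2 : ℝ) * Complex.I ∈ Metric.ball (f z) r := by
    simp [abs_of_pos hr, hr]
  have : (f z).im ≤ (f z).im - r / 2 := by simpa using hball hmem
  linarith

namespace MvPolynomial

theorem eq_zero_of_eventually_im_div_nonneg {σ : Type*} [Fintype σ]
    {p q : MvPolynomial σ ℂ} {z : σ → ℂ} (hp : eval z p = 0) (hq : eval z q ≠ 0)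
    (him : ∀ᶠ x in 𝓝 z, eval x q ≠ 0 → 0 ≤ (eval x p / eval x q).im) : p = 0 := by
  have hanalytic (r : MvPolynomial σ ℂ) : AnalyticOnNhd ℂ (eval · r) Set.univ :=
    AnalyticOnNhd.eval_mvPolynomial r
  have hq_ne : ∀ᶠ x in 𝓝 z, eval x q ≠ 0 :=
    (hanalytic q z trivial).continuousAt.eventually_ne hq
  have hratio : ∀ᶠ x in 𝓝 z, eval x p / eval x q = 0 := by
    have hmin : IsLocalMin (fun x => (eval x p / eval x q).im) z := by
      filter_upwards [him, hq_ne] with x hx hx'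
      simpa [hp] using hx hx'
    simpa [hp] using
      ((hanalytic p z trivial).div (hanalytic q z trivial) hq).eventually_eq_of_isLocalMin_im hmin
  have hzero : (eval · p) =ᶠ[𝓝 z] 0 := by
    filter_upwards [hratio, hq_ne] with x hx hx'
    simpa [hx'] using hx
  exact MvPolynomial.funext fun x => by
    rw [map_zero]
    exact congrFun ((hanalytic p).eq_of_eventuallyEq analyticOnNhd_const hzero) x

def IsStable {σ : Type*} (p : MvPolynomial σ ℂ) : Prop :=
  ∀ z : σ → ℂ, (∀ i, 0 < (z i).im) → eval z p ≠ 0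

/-- `P + w Q`, the new variable `w` being `none`. -/
noncomputable def addVarMul {R σ : Type*} [CommSemiring R] (P Q : MvPolynomial σ R) :
    MvPolynomial (Option σ) R :=
  rename some P + X none * rename some Q

theorem quadratic_ne_zero_of_isStable_addVarMul {σ : Type*} [DecidableEq σ]
    {P Q : MvPolynomial σ ℂ} {j : σ} (hstab : (addVarMul P Q).IsStable)
    (hdeg : (addVarMul P Q).degreeOf (some j) ≤ 1) {ζ : σ → ℂ} (hζ : ∀ i, 0 < (ζ i).im)
    {w : ℂ} (hw : 0 < w.im) :
    eval ζ Q * w ^ 2 + eval ζ (P - pderiv j Q) * w - eval ζ (pderiv j P) ≠ 0 := by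
  have hw0 : w ≠ 0 := by rintro rfl; simp at hw
  set Z : Option σ → ℂ := fun o => o.elim w ζ
  have hZ : ∀ o, 0 < (update Z (some j) (ζ j + -w⁻¹) o).im := by
    rintro (_ | i)
    · simpa [Z] using hw
    · rcases eq_or_ne i j with rfl | h
      · simpa using add_pos (hζ i) (Complex.im_neg_inv_pos hw)
      · simpa [Z, h] using hζ i
  have hG := hstab _ hZ
  rw [eval_update_of_degreeOf_le_one hdeg] at hG
  simp only [addVarMul, map_add, map_mul, eval_rename, comp_def, Option.elim_some, eval_X,
    Option.elim_none, add_sub_cancel_left, pderiv_rename (Option.some_injective σ),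
    Derivation.leibniz, smul_eq_mul, pderiv_X, ne_eq, reduceCtorEq, not_false_eq_true,
    Pi.single_eq_of_ne, mul_zero, add_zero, neg_mul, Z] at hG
  intro h
  rw [map_sub] at h
  apply hG
  field_simp
  linear_combination h

end MvPolynomial

/-- **Lieb–Sokal lemma.**
Let `P, Q ∈ ℂ[z_1,…,z_d]` and suppose the polynomial `P(z) + w·Q(z)` in the `d+1`
variables `z_1,…,z_d,w` is stable and the variable `z_j` occurs in it with degree at
most 1.  Then `P(z) - (∂Q/∂z_j)(z)` is stable or identically zero.
(The `d+1` variables are indexed by `Option (Fin d)`, with `none` playing the role of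
`w`.) -/
theorem stmt15 (d : ℕ) (P Q : MvPolynomial (Fin d) ℂ) (j : Fin d)
    (hstab : ∀ z : Option (Fin d) → ℂ, (∀ i, 0 < (z i).im) →
      MvPolynomial.eval z
        (MvPolynomial.rename (some : Fin d → Option (Fin d)) P +
          MvPolynomial.X none *
            MvPolynomial.rename (some : Fin d → Option (Fin d)) Q) ≠ 0)
    (hdeg : (MvPolynomial.rename (some : Fin d → Option (Fin d)) P +
        MvPolynomial.X none *
          MvPolynomial.rename (some : Fin d → Option (Fin d)) Q).degreeOf (some j) ≤ 1) :
    (∀ z : Fin d → ℂ, (∀ i, 0 < (z i).im) →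
        MvPolynomial.eval z (P - MvPolynomial.pderiv j Q) ≠ 0) ∨
      P - MvPolynomial.pderiv j Q = 0 := by
  refine or_iff_not_imp_right.2 fun hB z hz hBz => hB ?_
  have hquad : ∀ ζ : Fin d → ℂ, (∀ i, 0 < (ζ i).im) → ∀ w : ℂ, 0 < w.im →
      eval ζ Q * w ^ 2 + eval ζ (P - pderiv j Q) * w - eval ζ (pderiv j P) ≠ 0 :=
    fun ζ hζ w hw => quadratic_ne_zero_of_isStable_addVarMul hstab hdeg hζ hw
  have hupper : ∀ᶠ ζ in 𝓝 z, ∀ i, 0 < (ζ i).im := eventually_all.2 fun i =>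
    continuousAt_const.eventually_lt (Complex.continuous_im.comp (continuous_apply i)).continuousAt
      (hz i)
  by_cases hQ : eval z Q = 0
  · have hP : eval z (pderiv j P) ≠ 0 := by simpa [hQ, hBz] using hquad z hz Complex.I (by simp)
    exact eq_zero_of_eventually_im_div_nonneg hBz hP <| hupper.mono fun ζ hζ hne =>
      Complex.im_div_nonneg_of_quadratic_ne_zero hne (Complex.quadratic_ne_zero_swap (hquad ζ hζ))
  · exact eq_zero_of_eventually_im_div_nonneg hBz hQ <| hupper.mono fun ζ hζ hne =>
      Complex.im_div_nonneg_of_quadratic_ne_zero hne (hquad ζ hζ)
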